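/- arXiv:2411.14604 — 2 statements merged into one kernel-verified Lean document; each statement's English description precedes it below -/
import Mathlib

section
/- Let ℓ : H × [0,∞) → ℝ be such that ℓ(z, ·) is nondecreasing for each z ∈ H, let ρ : H → [0,∞) be bounded continuous, and ν a positive finite measure on H. Define F(x,μ) = ∫_H ℓ(z, ρ*μ(z)) ρ(z−x) ν(dz) where ρ*μ(z) = ∫_H ρ(z−u) μ(du). Then for all μ₁, μ₂ ∈ P₁(H): ∫_H [F(x,μ₁) − F(x,μ₂)](μ₁ − μ₂)(dx) = ∫_H [ℓ(z,ρ*μ₁(z)) − ℓ(z,ρ*μ₂(z))][ρ*μ₁(z) − ρ*μ₂(z)] ν(dz) ≥ 0. -/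
open MeasureTheory Filter

/-- for `ℓ(z,·)` nondecreasing, `ρ ≥ 0` bounded continuous, `ν` a finite
positive measure, `F(x,μ) = ∫ ℓ(z, ρ*μ(z)) ρ(z−x) ν(dz)` with `ρ*μ(z) = ∫ ρ(z−u) μ(du)`,
one has `∫ [F(x,μ₁) − F(x,μ₂)] d(μ₁−μ₂)(x)
  = ∫ [ℓ(z,ρ*μ₁(z)) − ℓ(z,ρ*μ₂(z))][ρ*μ₁(z) − ρ*μ₂(z)] ν(dz) ≥ 0`. -/
theorem stmt11 {H : Type*} [NormedAddCommGroup H] [InnerProductSpace ℝ H]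
    [MeasurableSpace H] [BorelSpace H] [SecondCountableTopology H]
    (ℓ : H → ℝ → ℝ) (ρ : H → ℝ)
    (hℓc : Continuous (Function.uncurry ℓ)) (Mℓ : ℝ) (hℓb : ∀ z t, |ℓ z t| ≤ Mℓ)
    (hmono : ∀ z, Monotone (ℓ z))
    (hρc : Continuous ρ) (hρ0 : ∀ x, 0 ≤ ρ x) (Mρ : ℝ) (hρb : ∀ x, ρ x ≤ Mρ)
    (ν μ₁ μ₂ : Measure H) [IsFiniteMeasure ν]
    [IsProbabilityMeasure μ₁] [IsProbabilityMeasure μ₂]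
    (hm₁ : Integrable (fun x => ‖x‖) μ₁) (hm₂ : Integrable (fun x => ‖x‖) μ₂)
    (conv : Measure H → H → ℝ) (hconv : ∀ μ z, conv μ z = ∫ u, ρ (z - u) ∂μ)
    (F : H → Measure H → ℝ)
    (hF : ∀ x μ, F x μ = ∫ z, ℓ z (conv μ z) * ρ (z - x) ∂ν) :
    ((∫ x, (F x μ₁ - F x μ₂) ∂μ₁) - ∫ x, (F x μ₁ - F x μ₂) ∂μ₂)
      = (∫ z, (ℓ z (conv μ₁ z) - ℓ z (conv μ₂ z)) * (conv μ₁ z - conv μ₂ z) ∂ν) ∧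
    0 ≤ ∫ z, (ℓ z (conv μ₁ z) - ℓ z (conv μ₂ z)) * (conv μ₁ z - conv μ₂ z) ∂ν := by
  have hMρ0 : 0 ≤ Mρ := le_trans (hρ0 0) (hρb 0)
  have hMℓ0 : 0 ≤ Mℓ := le_trans (abs_nonneg _) (hℓb 0 0)
  -- continuity of conv μ
  have hconvc : ∀ (μ : Measure H), IsProbabilityMeasure μ → Continuous (conv μ) := by
    intro μ hμ
    have : Continuous fun z => ∫ u, ρ (z - u) ∂μ := by
      apply continuous_of_dominated (bound := fun _ => Mρ)
      · intro z
        exact (hρc.comp (continuous_const.sub continuous_id)).aestronglyMeasurable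
      · intro z
        filter_upwards with u
        rw [Real.norm_eq_abs, abs_of_nonneg (hρ0 _)]
        exact hρb _
      · exact integrable_const Mρ
      · filter_upwards with u
        exact hρc.comp (continuous_id.sub continuous_const)
    have he : conv μ = fun z => ∫ u, ρ (z - u) ∂μ := funext (hconv μ)
    rw [he]; exact this
  have hc₁ : Continuous (conv μ₁) := hconvc μ₁ inferInstance
  have hc₂ : Continuous (conv μ₂) := hconvc μ₂ inferInstance
  -- continuity of z ↦ ℓ z (conv μ z)
  have hℓ₁ : Continuous fun z => ℓ z (conv μ₁ z) :=
    hℓc.comp (continuous_id.prodMk hc₁)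
  have hℓ₂ : Continuous fun z => ℓ z (conv μ₂ z) :=
    hℓc.comp (continuous_id.prodMk hc₂)
  set g : H → ℝ := fun z => ℓ z (conv μ₁ z) - ℓ z (conv μ₂ z) with hg
  have hgc : Continuous g := hℓ₁.sub hℓ₂
  have hgb : ∀ z, |g z| ≤ 2 * Mℓ := by
    intro z
    calc |g z| ≤ |ℓ z (conv μ₁ z)| + |ℓ z (conv μ₂ z)| := abs_sub _ _
    _ ≤ Mℓ + Mℓ := add_le_add (hℓb _ _) (hℓb _ _)
    _ = 2 * Mℓ := by ring
  -- key: for probability μ, ∫ x, (∫ z, g z * ρ (z - x) ∂ν) ∂μ = ∫ z, g z * conv μ z ∂ν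
  have key : ∀ (μ : Measure H), IsProbabilityMeasure μ →
      (∫ x, (∫ z, g z * ρ (z - x) ∂ν) ∂μ) = ∫ z, g z * conv μ z ∂ν := by
    intro μ hμ
    have hint : Integrable (Function.uncurry fun x z => g z * ρ (z - x)) (μ.prod ν) := by
      have hcont : Continuous (Function.uncurry fun x z => g z * ρ (z - x)) := by
        apply Continuous.mul
        · exact hgc.comp continuous_snd
        · exact hρc.comp (continuous_snd.sub continuous_fst)
      refine (integrable_const ((2 * Mℓ) * Mρ)).mono' hcont.aestronglyMeasurable ?_
      filter_upwards with p
      simp only [Function.uncurry, Real.norm_eq_abs, abs_mul]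
      exact mul_le_mul (hgb _) (by rw [abs_of_nonneg (hρ0 _)]; exact hρb _)
        (abs_nonneg _) (by linarith [hMℓ0])
    rw [integral_integral_swap hint]
    refine integral_congr_ae (Filter.Eventually.of_forall fun z => ?_)
    show (∫ x, g z * ρ (z - x) ∂μ) = g z * conv μ z
    rw [integral_const_mul, hconv]
  -- F x μ₁ - F x μ₂ = ∫ z, g z * ρ(z-x) ∂ν
  have hintℓ : ∀ (x : H) (μ : Measure H), Continuous (conv μ) →
      Integrable (fun z => ℓ z (conv μ z) * ρ (z - x)) ν := by
    intro x μ hcμ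
    have hcont : Continuous fun z => ℓ z (conv μ z) * ρ (z - x) :=
      (hℓc.comp (continuous_id.prodMk hcμ)).mul
        (hρc.comp (continuous_id.sub continuous_const))
    refine (integrable_const (Mℓ * Mρ)).mono' hcont.aestronglyMeasurable ?_
    filter_upwards with z
    rw [Real.norm_eq_abs, abs_mul]
    exact mul_le_mul (hℓb _ _) (by rw [abs_of_nonneg (hρ0 _)]; exact hρb _)
      (abs_nonneg _) hMℓ0
  have hFdiff : ∀ x, F x μ₁ - F x μ₂ = ∫ z, g z * ρ (z - x) ∂ν := by
    intro x
    rw [hF, hF, ← integral_sub (hintℓ x μ₁ hc₁) (hintℓ x μ₂ hc₂)]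
    refine integral_congr_ae (Filter.Eventually.of_forall fun z => ?_)
    simp only [hg]; ring
  have hLHS : ∀ (μ : Measure H), IsProbabilityMeasure μ →
      (∫ x, (F x μ₁ - F x μ₂) ∂μ) = ∫ z, g z * conv μ z ∂ν := by
    intro μ hμ
    rw [← key μ hμ]
    exact integral_congr_ae (Filter.Eventually.of_forall fun x => hFdiff x)
  -- integrability of g * conv μ
  have hintg : ∀ (μ : Measure H), IsProbabilityMeasure μ → Continuous (conv μ) →
      Integrable (fun z => g z * conv μ z) ν := by
    intro μ hμ hcμ
    have hconvb : ∀ z, |conv μ z| ≤ Mρ := by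
      intro z
      rw [hconv]
      have h1 : |∫ u, ρ (z - u) ∂μ| ≤ ∫ u, |ρ (z - u)| ∂μ := by
        simpa [Real.norm_eq_abs] using norm_integral_le_integral_norm (μ := μ)
          (fun u => ρ (z - u))
      refine h1.trans ?_
      calc (∫ u, |ρ (z - u)| ∂μ) ≤ ∫ _u, Mρ ∂μ := by
            refine integral_mono_of_nonneg (Filter.Eventually.of_forall fun u => abs_nonneg _)
              (integrable_const Mρ) (Filter.Eventually.of_forall fun u => ?_)
            dsimp only
            rw [abs_of_nonneg (hρ0 _)]; exact hρb _
      _ = Mρ := by simp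
    refine (integrable_const ((2 * Mℓ) * Mρ)).mono' ((hgc.mul hcμ).aestronglyMeasurable) ?_
    filter_upwards with z
    rw [Real.norm_eq_abs, abs_mul]
    exact mul_le_mul (hgb _) (hconvb _) (abs_nonneg _) (by linarith [hMℓ0])
  constructor
  · rw [hLHS μ₁ inferInstance, hLHS μ₂ inferInstance,
      ← integral_sub (hintg μ₁ inferInstance hc₁) (hintg μ₂ inferInstance hc₂)]
    refine integral_congr_ae (Filter.Eventually.of_forall fun z => ?_)
    simp only [hg]; ring
  · refine integral_nonneg fun z => ?_
    simp only [Pi.zero_apply]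
    rcases le_total (conv μ₂ z) (conv μ₁ z) with h | h
    · nlinarith [hmono z h]
    · nlinarith [hmono z h]
end

section
/- Let f₁ : ℝ → ℝ be C¹, even, and uniformly convex (s ↦ f₁(s) − η s² convex for some η > 0), and let R > 0. Define H¹(p) = sup over |α| ≤ R in H of (⟨α,p⟩ − f₁(|α|)). Then H¹(p) = (f₁')^{−1}(|p|)·|p| − f₁((f₁')^{−1}(|p|)) if |p| < f₁'(R), and H¹(p) = R|p| − f₁(R) if |p| ≥ f₁'(R). -/
/-!
Write `c = ‖p‖`. By Cauchy–Schwarz `⟪α, p⟫ - f₁ ‖α‖ ≤ ‖α‖ c - f₁ ‖α‖`, with equality for `α` a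
nonnegative multiple of `p`, so the supremum is the maximum of `t ↦ t c - f₁ t` on `[0, R]`.
Uniform convexity makes `f₁'` strictly increasing, and evenness gives `f₁' 0 = 0`. Since `f₁` is
convex, its tangent line at `t₀` lies below it, so `t₀` maximizes `t c - f₁ t` on `[0, R]` when
`f₁' t₀ = c` (take `t₀ = g c`), or when `t₀ = R` and `f₁' R ≤ c`.
-/

open Set
open scoped RealInnerProductSpace

theorem strictMono_deriv_of_convexOn_sub_sq {f : ℝ → ℝ} {η : ℝ} (hf : Differentiable ℝ f)
    (hη : 0 < η) (hconv : ConvexOn ℝ univ fun s => f s - η * s ^ 2) : StrictMono (deriv f) := by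
  have hderiv (t : ℝ) : HasDerivAt (fun s => f s - η * s ^ 2) (deriv f t - 2 * η * t) t := by
    refine ((hf t).hasDerivAt.fun_sub ((hasDerivAt_pow 2 t).const_mul η)).congr_deriv ?_
    norm_num
    ring
  intro s t hst
  have hmono := hconv.monotoneOn_deriv (fun x _ => (hderiv x).differentiableAt)
    (mem_univ s) (mem_univ t) hst.le
  rw [(hderiv s).deriv, (hderiv t).deriv] at hmono
  nlinarith

theorem deriv_zero_of_even {f : ℝ → ℝ} (hf : ∀ s, f (-s) = f s) : deriv f 0 = 0 := by
  have h := deriv_comp_neg (f := f) (x := 0)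
  simp only [hf, neg_zero] at h
  linarith

theorem ConvexOn.add_deriv_mul_sub_le {f : ℝ → ℝ} {x : ℝ} (hf : ConvexOn ℝ univ f)
    (hx : DifferentiableAt ℝ f x) (y : ℝ) : f x + deriv f x * (y - x) ≤ f y := by
  rcases lt_trichotomy x y with hxy | rfl | hyx
  · have h := hf.deriv_le_slope (mem_univ x) (mem_univ y) hxy hx
    rw [slope_def_field, le_div_iff₀ (sub_pos.2 hxy)] at h
    linarith
  · simp
  · have h := hf.slope_le_deriv (mem_univ y) (mem_univ x) hyx hx
    rw [slope_def_field, div_le_iff₀ (sub_pos.2 hyx)] at h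
    linarith

/-- By the tangent line inequality, `t c - f t ≤ t₀ c - f t₀ + (t - t₀) (c - f' t₀)`. -/
theorem ConvexOn.isMaxOn_mul_sub {f : ℝ → ℝ} {s : Set ℝ} {c t₀ : ℝ} (hf : ConvexOn ℝ univ f)
    (ht₀ : DifferentiableAt ℝ f t₀) (hs : ∀ t ∈ s, (t - t₀) * (c - deriv f t₀) ≤ 0) :
    IsMaxOn (fun t => t * c - f t) s t₀ := isMaxOn_iff.2 fun t ht => by
  nlinarith [hf.add_deriv_mul_sub_le ht₀ t, hs t ht]

section InnerProductSpace

variable {H : Type*} [NormedAddCommGroup H] [InnerProductSpace ℝ H]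

theorem exists_norm_eq_inner_eq {p : H} (hp : p ≠ 0) {t : ℝ} (ht : 0 ≤ t) :
    ∃ α : H, ‖α‖ = t ∧ ⟪α, p⟫ = t * ‖p‖ := by
  have hp' : 0 < ‖p‖ := norm_pos_iff.2 hp
  refine ⟨(t / ‖p‖) • p, ?_, ?_⟩
  · rw [norm_smul, Real.norm_of_nonneg (div_nonneg ht hp'.le), div_mul_cancel₀ _ hp'.ne']
  · rw [real_inner_smul_left, real_inner_self_eq_norm_sq]
    field_simp

/-- `H` may be trivial, so for `p = 0` only `t₀ = 0` is guaranteed to be the norm of some `α`. -/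
theorem isGreatest_inner_sub_comp_norm (F : ℝ → ℝ) {R t₀ : ℝ} (p : H) (ht₀ : t₀ ∈ Icc 0 R)
    (hmax : IsMaxOn (fun t => t * ‖p‖ - F t) (Icc 0 R) t₀) (hp : p ≠ 0 ∨ t₀ = 0) :
    IsGreatest {y | ∃ α : H, ‖α‖ ≤ R ∧ y = ⟪α, p⟫ - F ‖α‖} (t₀ * ‖p‖ - F t₀) := by
  refine ⟨?_, ?_⟩
  · obtain ⟨α, hα, hαp⟩ : ∃ α : H, ‖α‖ = t₀ ∧ ⟪α, p⟫ = t₀ * ‖p‖ := by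
      rcases hp with hp | rfl
      · exact exists_norm_eq_inner_eq hp ht₀.1
      · exact ⟨0, norm_zero, by simp⟩
    exact ⟨α, hα ▸ ht₀.2, by rw [hα, hαp]⟩
  · rintro y ⟨α, hα, rfl⟩
    linarith [isMaxOn_iff.1 hmax _ ⟨norm_nonneg α, hα⟩, real_inner_le_norm α p]

end InnerProductSpace

theorem stmt13_general {H : Type*} [NormedAddCommGroup H] [InnerProductSpace ℝ H]
    (R η : ℝ) (hR : 0 < R) (hη : 0 < η)
    (f₁ : ℝ → ℝ) (hdiff : Differentiable ℝ f₁)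
    (heven : ∀ s, f₁ (-s) = f₁ s)
    (hconv : ConvexOn ℝ Set.univ (fun s => f₁ s - η * s ^ 2))
    (g : ℝ → ℝ)
    (hg : ∀ r ∈ Set.Ico (0:ℝ) (deriv f₁ R), g r ∈ Set.Ico (0:ℝ) R ∧ deriv f₁ (g r) = r)
    (p : H) :
    (‖p‖ < deriv f₁ R →
      sSup {y : ℝ | ∃ α : H, ‖α‖ ≤ R ∧ y = ⟪α, p⟫ - f₁ ‖α‖}
        = g ‖p‖ * ‖p‖ - f₁ (g ‖p‖)) ∧
    (deriv f₁ R ≤ ‖p‖ →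
      sSup {y : ℝ | ∃ α : H, ‖α‖ ≤ R ∧ y = ⟪α, p⟫ - f₁ ‖α‖}
        = R * ‖p‖ - f₁ R) := by
  have hmono := strictMono_deriv_of_convexOn_sub_sq hdiff hη hconv
  have hconvex : ConvexOn ℝ univ f₁ := hmono.monotone.convexOn_univ_of_deriv hdiff
  have hderiv0 := deriv_zero_of_even heven
  refine ⟨fun hlt => ?_, fun hge => ?_⟩
  · obtain ⟨⟨hg0, hgR⟩, hgp⟩ := hg ‖p‖ ⟨norm_nonneg p, hlt⟩
    have hmax := hconvex.isMaxOn_mul_sub (s := Icc 0 R) (hdiff (g ‖p‖)) fun t _ => by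
      rw [hgp, sub_self, mul_zero]
    refine (isGreatest_inner_sub_comp_norm f₁ p ⟨hg0, hgR.le⟩ hmax ?_).csSup_eq
    rcases eq_or_ne p 0 with rfl | hp
    · exact .inr (hmono.injective (by rw [hgp, hderiv0, norm_zero]))
    · exact .inl hp
  · have hp : p ≠ 0 := norm_pos_iff.1 (hderiv0 ▸ hmono hR |>.trans_le hge)
    have hmax := hconvex.isMaxOn_mul_sub (s := Icc 0 R) (hdiff R) fun t ht =>
      mul_nonpos_of_nonpos_of_nonneg (sub_nonpos.2 ht.2) (sub_nonneg.2 hge)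
    exact (isGreatest_inner_sub_comp_norm f₁ p ⟨hR.le, le_rfl⟩ hmax (.inl hp)).csSup_eq

/-- for `f₁` C¹, even and uniformly convex, `R > 0`, and
`H¹(p) = sup_{‖α‖≤R} (⟨α,p⟩ − f₁(‖α‖))`, with `g = (f₁')⁻¹` on `[0, f₁'(R))`:
if `‖p‖ < f₁'(R)` then `H¹(p) = g(‖p‖)‖p‖ − f₁(g(‖p‖))`, and if `‖p‖ ≥ f₁'(R)` then
`H¹(p) = R‖p‖ − f₁(R)`. -/
theorem stmt13 {H : Type*} [NormedAddCommGroup H] [InnerProductSpace ℝ H]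
    (R η : ℝ) (hR : 0 < R) (hη : 0 < η)
    (f₁ : ℝ → ℝ) (hdiff : Differentiable ℝ f₁) (hderivcont : Continuous (deriv f₁))
    (heven : ∀ s, f₁ (-s) = f₁ s)
    (hconv : ConvexOn ℝ Set.univ (fun s => f₁ s - η * s ^ 2))
    (g : ℝ → ℝ)
    (hg : ∀ r ∈ Set.Ico (0:ℝ) (deriv f₁ R), g r ∈ Set.Ico (0:ℝ) R ∧ deriv f₁ (g r) = r)
    (p : H) :
    (‖p‖ < deriv f₁ R →
      sSup {y : ℝ | ∃ α : H, ‖α‖ ≤ R ∧ y = ⟪α, p⟫ - f₁ ‖α‖}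
        = g ‖p‖ * ‖p‖ - f₁ (g ‖p‖)) ∧
    (deriv f₁ R ≤ ‖p‖ →
      sSup {y : ℝ | ∃ α : H, ‖α‖ ≤ R ∧ y = ⟪α, p⟫ - f₁ ‖α‖}
        = R * ‖p‖ - f₁ R) :=
  stmt13_general R η hR hη f₁ hdiff heven hconv g hg p
end
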